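/- The n-th 2-colored Motzkin number equals the (n+1)-st Catalan number, i.e., m_{n,2} = C_{n+1} for all n ≥ 0. -/

import Mathlib

open Finset

/-- The `k`-colored Motzkin numbers: `m 0 = 1`,
`m (n+1) = k·m n + ∑_{j=0}^{n-1} m j · m (n-1-j)`. -/
def coloredMotzkin (k : ℕ) : ℕ → ℕ
  | 0 => 1
  | n + 1 => k * coloredMotzkin k n + ∑ i : Fin n, coloredMotzkin k i * coloredMotzkin k (n - 1 - i)
decreasing_by
  · exact Nat.lt_succ_self n
  · exact Nat.lt_succ_of_lt i.is_lt
  · have := i.is_lt; omega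

/-!
Splitting off the two extreme terms `C₀ C_{n+1} = C_{n+1} C₀` of the Catalan recurrence for
`C_{n+2}` turns it into the recurrence of the 2-colored Motzkin numbers, shifted by one:
`C_{n+2} = 2 C_{n+1} + ∑_{j<n} C_{j+1} C_{n-j}`.
-/

theorem coloredMotzkin_zero (k : ℕ) : coloredMotzkin k 0 = 1 := by
  rw [coloredMotzkin]

theorem coloredMotzkin_succ (k n : ℕ) :
    coloredMotzkin k (n + 1) =
      k * coloredMotzkin k n + ∑ i : Fin n, coloredMotzkin k i * coloredMotzkin k (n - 1 - i) := by
  rw [coloredMotzkin]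

theorem catalan_add_two (n : ℕ) :
    catalan (n + 2) = 2 * catalan (n + 1) + ∑ i : Fin n, catalan (i + 1) * catalan (n - i) := by
  rw [catalan_succ (n + 1), Fin.sum_univ_succ, Fin.sum_univ_castSucc]
  simp only [Fin.val_zero, Fin.val_succ, Fin.val_castSucc, Fin.val_last, catalan_zero,
    Nat.sub_zero, Nat.sub_self, Nat.add_sub_add_right]
  ring

/-- The `n`-th 2-colored Motzkin number equals the `(n+1)`-st Catalan number. -/
theorem coloredMotzkin_two_eq_catalan_succ (n : ℕ) :
    coloredMotzkin 2 n = catalan (n + 1) := by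
  induction n using Nat.strong_induction_on with
  | _ n ih =>
    cases n with
    | zero => rw [coloredMotzkin_zero, catalan_one]
    | succ n =>
      rw [coloredMotzkin_succ, catalan_add_two, ih n n.lt_succ_self]
      congr 1
      refine Fintype.sum_congr _ _ fun i => ?_
      have hi := i.is_lt
      rw [ih i (by omega), ih (n - 1 - i) (by omega), show n - 1 - i + 1 = n - i by omega]
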